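/- arXiv:1807.11199 — 3 statements merged into one kernel-verified Lean document; each statement's English description precedes it below -/
import Mathlib

section
/- Let n ≥ 2, x ∈ ℝⁿ, b ∈ {−1,0,1}ⁿ with E_n(x;b) < +∞, and suppose there are indices I ≠ J with b_I·b_J = −1 and x_I = x_J. Let b̄ equal b except b̄_I = b̄_J = 0. Assume (V+W)(r) ≥ −C₁ r² for all r ≠ 0 and W is continuous at 0. Then E_n(x; b̄) ≤ E_n(x; b) + (C/n)(M₂(x) + x_I² + 1) for some constant C depending only on C₁ and |W(0)|. -/
open Finset

/-- The two-species interaction energy `E_n`. -/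
noncomputable def En (n : ℕ) (V W : ℝ → ℝ) (x : Fin n → ℝ) (b : Fin n → ℤ) : ℝ :=
  (1 / (2 * (n : ℝ) ^ 2)) *
    ∑ i, ((∑ j ∈ univ.filter (fun j => j ≠ i ∧ b i * b j = 1), V (x i - x j)) +
          (∑ j ∈ univ.filter (fun j => b i * b j = -1), W (x i - x j)))

/-- The second moment `M₂` of the empirical measure. -/
noncomputable def M2 (n : ℕ) (x : Fin n → ℝ) : ℝ := (1 / (n : ℝ)) * ∑ i, (x i) ^ 2

/-!
Setting the charges at `I` and `J` to zero deletes rows and columns `I`, `J` of the matrix of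
pair interactions. Since `b I * b J = -1`, every other charge `k` is attracted by one of `I`, `J`
and repelled by the other, and both sit at `y = x I = x J`; so the deleted entries of row `k`
(and of column `k`) add up to `|b k| (V + W) (±(x k - y)) ≥ -C₁ (x k - y)²`, where `x k ≠ y`
when `b k ≠ 0` because like charges never collide. The `2 × 2` block contributes
`2 W 0 ≥ -2 C₁`.
Summing, dividing by `2 n²` and using `(x k - y)² ≤ 2 x k² + 2 y²` gives the bound with
`C = 2 C₁`.
-/

section PairEnergy

variable {ι : Type*} [DecidableEq ι] (V W : ℝ → ℝ) (x : ι → ℝ) (b : ι → ℤ)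

def pairEnergy (i j : ι) : ℝ :=
  (if j ≠ i ∧ b i * b j = 1 then V (x i - x j) else 0) +
    (if b i * b j = -1 then W (x i - x j) else 0)

theorem En_eq_sum_pairEnergy (n : ℕ) (x : Fin n → ℝ) (b : Fin n → ℤ) :
    En n V W x b = 1 / (2 * (n : ℝ) ^ 2) * ∑ i, ∑ j, pairEnergy V W x b i j := by
  unfold En pairEnergy
  simp only [sum_filter, sum_add_distrib]

variable {V W x b}

theorem pairEnergy_of_mul_eq_one {i j : ι} (hij : j ≠ i) (h : b i * b j = 1) :
    pairEnergy V W x b i j = V (x i - x j) := by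
  simp [pairEnergy, hij, h]

theorem pairEnergy_of_mul_eq_neg_one {i j : ι} (h : b i * b j = -1) :
    pairEnergy V W x b i j = W (x i - x j) := by
  simp [pairEnergy, h]

theorem pairEnergy_of_left_eq_zero {i j : ι} (h : b i = 0) : pairEnergy V W x b i j = 0 := by
  simp [pairEnergy, h]

theorem pairEnergy_of_right_eq_zero {i j : ι} (h : b j = 0) : pairEnergy V W x b i j = 0 := by
  simp [pairEnergy, h]

theorem pairEnergy_self (i : ι) : pairEnergy V W x b i i = 0 := by
  have : b i * b i ≠ -1 := by nlinarith [mul_self_nonneg (b i)]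
  simp [pairEnergy, this]

theorem pairEnergy_swap (i j : ι) :
    pairEnergy V W x b j i = pairEnergy (fun r => V (-r)) (fun r => W (-r)) x b i j := by
  simp only [pairEnergy, neg_sub, ne_comm, mul_comm (b i)]

theorem sum_sum_pairEnergy_eq_piecewise [Fintype ι] (P : Finset ι) :
    ∑ i, ∑ j, pairEnergy V W x b i j =
      ∑ i, ∑ j, pairEnergy V W x (P.piecewise 0 b) i j +
        ∑ i ∈ P, ∑ j, pairEnergy V W x b i j + ∑ i ∈ Pᶜ, ∑ j ∈ P, pairEnergy V W x b i j := by
  have hrow : ∀ i ∈ P, ∑ j, pairEnergy V W x (P.piecewise 0 b) i j = 0 := fun i hi =>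
    sum_eq_zero fun j _ => pairEnergy_of_left_eq_zero (by simp [hi])
  have hcol : ∀ i, ∑ j ∈ P, pairEnergy V W x (P.piecewise 0 b) i j = 0 := fun i =>
    sum_eq_zero fun j hj => pairEnergy_of_right_eq_zero (by simp [hj])
  have hrest : ∀ i ∈ Pᶜ, ∀ j ∈ Pᶜ,
      pairEnergy V W x (P.piecewise 0 b) i j = pairEnergy V W x b i j := by
    intro i hi j hj
    rw [mem_compl] at hi hj
    simp only [pairEnergy, piecewise_eq_of_notMem _ _ _ hi, piecewise_eq_of_notMem _ _ _ hj]
  rw [← sum_add_sum_compl P, ← sum_add_sum_compl P, sum_congr rfl hrow, sum_const_zero, zero_add]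
  simp only [← sum_add_sum_compl P (pairEnergy V W x _ _), hcol, zero_add, sum_add_distrib]
  rw [sum_congr rfl fun i hi => sum_congr rfl (hrest i hi)]
  ring

end PairEnergy

section Annihilation

variable {ι : Type*} [DecidableEq ι] {V W : ℝ → ℝ} {x : ι → ℝ} {b : ι → ℤ} {C₁ : ℝ} {I J k : ι}

theorem neg_mul_sq_le_pairEnergy_add_of_ne (hC₁ : 0 ≤ C₁)
    (hVW : ∀ r : ℝ, r ≠ 0 → -C₁ * r ^ 2 ≤ V r + W r) (hk : b k = -1 ∨ b k = 0 ∨ b k = 1)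
    (hkI : k ≠ I) (hkJ : k ≠ J) (hbIJ : b I * b J = -1) (hxIJ : x I = x J)
    (hcol : ∀ i j, i ≠ j → b i * b j = 1 → x i ≠ x j) :
    -(C₁ * (x k - x I) ^ 2) ≤ pairEnergy V W x b k I + pairEnergy V W x b k J := by
  obtain hk0 | hk1 : b k = 0 ∨ b k * b k = 1 := by rcases hk with h | h | h <;> simp [h]
  · simp only [pairEnergy_of_left_eq_zero hk0, add_zero]
    exact neg_nonpos.2 (by positivity)
  have hprod : (b k * b I) * (b k * b J) = -1 := by
    linear_combination (b I * b J) * hk1 + hbIJ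
  rcases Int.mul_eq_neg_one_iff_eq_one_or_neg_one.1 hprod with ⟨hI, hJ⟩ | ⟨hI, hJ⟩
  · rw [pairEnergy_of_mul_eq_one hkI.symm hI, pairEnergy_of_mul_eq_neg_one hJ, ← hxIJ]
    linarith [hVW _ (sub_ne_zero.2 (hcol k I hkI hI))]
  · rw [pairEnergy_of_mul_eq_neg_one hI, pairEnergy_of_mul_eq_one hkJ.symm hJ, hxIJ, add_comm]
    linarith [hVW _ (sub_ne_zero.2 (hcol k J hkJ hJ))]

theorem neg_mul_sq_le_pairEnergy_add_of_ne' (hC₁ : 0 ≤ C₁)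
    (hVW : ∀ r : ℝ, r ≠ 0 → -C₁ * r ^ 2 ≤ V r + W r) (hk : b k = -1 ∨ b k = 0 ∨ b k = 1)
    (hkI : k ≠ I) (hkJ : k ≠ J) (hbIJ : b I * b J = -1) (hxIJ : x I = x J)
    (hcol : ∀ i j, i ≠ j → b i * b j = 1 → x i ≠ x j) :
    -(C₁ * (x k - x I) ^ 2) ≤ pairEnergy V W x b I k + pairEnergy V W x b J k := by
  rw [pairEnergy_swap k I, pairEnergy_swap k J]
  refine neg_mul_sq_le_pairEnergy_add_of_ne hC₁ (fun r hr => ?_) hk hkI hkJ hbIJ hxIJ hcol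
  simpa only [neg_sq] using hVW (-r) (neg_ne_zero.2 hr)

theorem sum_sum_pairEnergy_piecewise_le [Fintype ι]
    (hVW : ∀ r : ℝ, r ≠ 0 → -C₁ * r ^ 2 ≤ V r + W r) (hW0 : |W 0| ≤ C₁)
    (hb : ∀ i, b i = -1 ∨ b i = 0 ∨ b i = 1) (hIJ : I ≠ J) (hbIJ : b I * b J = -1)
    (hxIJ : x I = x J) (hcol : ∀ i j, i ≠ j → b i * b j = 1 → x i ≠ x j) :
    ∑ i, ∑ j, pairEnergy V W x (({I, J} : Finset ι).piecewise 0 b) i j ≤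
      ∑ i, ∑ j, pairEnergy V W x b i j + C₁ * (2 * ∑ i, (x i - x I) ^ 2 + Fintype.card ι) := by
  have hC₁ : 0 ≤ C₁ := (abs_nonneg _).trans hW0
  have hW0' : -C₁ ≤ W 0 := neg_le_of_abs_le hW0
  have hbJI : b J * b I = -1 := by rwa [mul_comm]
  have hpair : ∀ j, -(C₁ * (x j - x I) ^ 2 + C₁) ≤
      pairEnergy V W x b I j + pairEnergy V W x b J j := by
    intro j
    by_cases hjI : j = I
    · rw [hjI, pairEnergy_self, pairEnergy_of_mul_eq_neg_one hbJI, hxIJ]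
      simpa using hW0'
    by_cases hjJ : j = J
    · rw [hjJ, pairEnergy_self, pairEnergy_of_mul_eq_neg_one hbIJ, hxIJ]
      simpa using hW0'
    linarith [neg_mul_sq_le_pairEnergy_add_of_ne' hC₁ hVW (hb j) hjI hjJ hbIJ hxIJ hcol]
  have hrows : -(C₁ * ∑ i, (x i - x I) ^ 2 + Fintype.card ι * C₁) ≤
      ∑ i ∈ {I, J}, ∑ j, pairEnergy V W x b i j := by
    rw [sum_pair hIJ, ← sum_add_distrib]
    refine le_of_eq_of_le ?_ (sum_le_sum fun j _ => hpair j)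
    simp only [sum_neg_distrib, sum_add_distrib, ← mul_sum, sum_const, card_univ, nsmul_eq_mul]
  have hcols : -(C₁ * ∑ i, (x i - x I) ^ 2) ≤
      ∑ i ∈ ({I, J} : Finset ι)ᶜ, ∑ j ∈ {I, J}, pairEnergy V W x b i j := by
    have hsq : ∑ i ∈ ({I, J} : Finset ι)ᶜ, (x i - x I) ^ 2 ≤ ∑ i, (x i - x I) ^ 2 :=
      sum_le_univ_sum_of_nonneg fun _ => sq_nonneg _
    have hle := sum_le_sum fun i (hi : i ∈ ({I, J} : Finset ι)ᶜ) => by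
      simp only [mem_compl, mem_insert, mem_singleton, not_or] at hi
      exact neg_mul_sq_le_pairEnergy_add_of_ne hC₁ hVW (hb i) hi.1 hi.2 hbIJ hxIJ hcol
    simp only [sum_pair hIJ, sum_neg_distrib, ← mul_sum] at hle ⊢
    linarith [mul_le_mul_of_nonneg_left hsq hC₁]
  linarith [sum_sum_pairEnergy_eq_piecewise (V := V) (W := W) (x := x) (b := b) {I, J}]

end Annihilation

theorem sum_sub_sq_le {ι : Type*} [Fintype ι] (x : ι → ℝ) (a : ℝ) :
    ∑ i, (x i - a) ^ 2 ≤ 2 * (∑ i, x i ^ 2 + Fintype.card ι * a ^ 2) := by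
  calc ∑ i, (x i - a) ^ 2 ≤ ∑ i, 2 * (x i ^ 2 + a ^ 2) :=
        sum_le_sum fun i _ => by simpa [sub_eq_add_neg] using add_sq_le (a := x i) (b := -a)
    _ = 2 * (∑ i, x i ^ 2 + Fintype.card ι * a ^ 2) := by
        rw [← mul_sum, sum_add_distrib, sum_const, card_univ, nsmul_eq_mul]

/-- Annihilating a colliding pair of opposite charges increases the energy at most by
`(C/n)(M₂(x) + x_I² + 1)`. -/
theorem En_annihilation_jump (C₁ : ℝ) (hC₁ : 0 < C₁) :
    ∃ C > 0, ∀ (n : ℕ), 2 ≤ n → ∀ (x : Fin n → ℝ) (b : Fin n → ℤ)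
      (V W : ℝ → ℝ) (I J : Fin n),
      (∀ i, b i = -1 ∨ b i = 0 ∨ b i = 1) →
      I ≠ J → b I * b J = -1 → x I = x J →
      (∀ r : ℝ, r ≠ 0 → -C₁ * r ^ 2 ≤ V r + W r) →
      abs (W 0) ≤ C₁ →
      (∀ i j, i ≠ j → b i * b j = 1 → x i ≠ x j) →
      En n V W x (fun i => if i = I ∨ i = J then 0 else b i)
        ≤ En n V W x b + (C / (n : ℝ)) * (M2 n x + (x I) ^ 2 + 1) := by
  refine ⟨2 * C₁, by positivity, fun n hn x b V W I J hb hIJ hbIJ hxIJ hVW hW0 hcol => ?_⟩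
  have hb' : (fun i => if i = I ∨ i = J then 0 else b i) =
      ({I, J} : Finset (Fin n)).piecewise 0 b := by
    ext i
    simp [Finset.piecewise]
  have hS := sum_sum_pairEnergy_piecewise_le hVW hW0 hb hIJ hbIJ hxIJ hcol
  have hQ := sum_sub_sq_le x (x I)
  rw [Fintype.card_fin] at hS hQ
  have hn0 : (0 : ℝ) < n := by positivity
  rw [hb', En_eq_sum_pairEnergy, En_eq_sum_pairEnergy, M2]
  set S := ∑ i, ∑ j, pairEnergy V W x b i j
  set A := ∑ i, x i ^ 2
  calc 1 / (2 * (n : ℝ) ^ 2) * ∑ i, ∑ j, pairEnergy V W x (({I, J} : Finset _).piecewise 0 b) i j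
      ≤ 1 / (2 * (n : ℝ) ^ 2) * (S + C₁ * (2 * (2 * (A + n * x I ^ 2)) + n)) := by
        gcongr
        linarith [mul_le_mul_of_nonneg_left hQ hC₁.le]
    _ = 1 / (2 * (n : ℝ) ^ 2) * S + 2 * C₁ / n * (1 / n * A + x I ^ 2 + 1) - 3 * C₁ / (2 * n) := by
        field_simp
        ring
    _ ≤ 1 / (2 * (n : ℝ) ^ 2) * S + 2 * C₁ / n * (1 / n * A + x I ^ 2 + 1) :=
        sub_le_self _ (by positivity)
end

section
/- Let x : [0,T] → ℝⁿ be a classical solution of the ODE system ẋ_i = −(1/n) Σ_{j : b_i b_j = 1} V'(x_i − x_j) − (1/n) Σ_{j : b_i b_j = −1} W'(x_i − x_j) with fixed charges b ∈ {−1,0,1}ⁿ, where V' and W' are odd and r·V'(r), r·W'(r) are bounded by a constant C₀. Then the second moment M₂(x(t)) = (1/n) Σ_i x_i(t)² satisfies M₂(x(t)) ≤ M₂(x(0)) + C·t for all t ∈ [0,T], with C depending only on C₀. -/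
/-!
Along the flow, `dM₂/dt = (2/n) ∑ᵢ xᵢ ẋᵢ` is `-2/n²` times a sum over interacting pairs of
`xᵢ V'(xᵢ - xⱼ)` (resp. `W'`). Since the interaction relation is symmetric and `V'` is odd,
exchanging `i` and `j` turns each such sum into half of `∑ (xᵢ - xⱼ) V'(xᵢ - xⱼ)`, which is at
most `n² C₀` in absolute value. Hence `|dM₂/dt| ≤ 2 C₀`, and the mean value inequality gives
`M₂(x(t)) ≤ M₂(x(0)) + 2 C₀ t`.
-/

open Finset

section Symmetrization

variable {ι : Type*} [Fintype ι] (R : ι → ι → Prop) [DecidableRel R] (y : ι → ℝ) (g : ℝ → ℝ)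

theorem sum_mul_sum_filter_odd_eq (hR : ∀ i j, R i j → R j i) (hodd : ∀ r, g (-r) = -g r) :
    ∑ i, y i * ∑ j ∈ univ.filter (R i), g (y i - y j)
      = (∑ i, ∑ j ∈ univ.filter (R i), (y i - y j) * g (y i - y j)) / 2 := by
  have hswap : ∑ i, ∑ j ∈ univ.filter (R i), y j * g (y i - y j)
      = -∑ i, ∑ j ∈ univ.filter (R i), y i * g (y i - y j) := by
    simp only [sum_filter]
    rw [sum_comm, ← sum_neg_distrib]
    refine sum_congr rfl fun i _ => ?_
    rw [← sum_neg_distrib]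
    refine sum_congr rfl fun j _ => ?_
    have hRji : R j i ↔ R i j := ⟨hR j i, hR i j⟩
    rw [← neg_sub (y i) (y j), hodd, if_congr hRji rfl rfl]
    split_ifs <;> ring
  simp only [sub_mul, sum_sub_distrib, hswap, mul_sum]
  ring

theorem abs_sum_mul_sum_filter_odd_le (hR : ∀ i j, R i j → R j i) (hodd : ∀ r, g (-r) = -g r)
    {C₀ : ℝ} (hbd : ∀ r, |r * g r| ≤ C₀) :
    |∑ i, y i * ∑ j ∈ univ.filter (R i), g (y i - y j)| ≤ Fintype.card ι ^ 2 * C₀ / 2 := by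
  have hC₀ : 0 ≤ C₀ := (abs_nonneg _).trans (hbd 0)
  have hrow : ∀ i, |∑ j ∈ univ.filter (R i), (y i - y j) * g (y i - y j)| ≤ Fintype.card ι * C₀ :=
    fun i => calc
      _ ≤ ∑ j ∈ univ.filter (R i), |(y i - y j) * g (y i - y j)| := abs_sum_le_sum_abs _ _
      _ ≤ ∑ _j ∈ univ.filter (R i), C₀ := sum_le_sum fun j _ => hbd _
      _ ≤ Fintype.card ι * C₀ := by
        rw [sum_const, nsmul_eq_mul]
        gcongr
        exact card_le_univ _
  rw [sum_mul_sum_filter_odd_eq R y g hR hodd, abs_div, abs_two]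
  gcongr
  calc _ ≤ ∑ i, |∑ j ∈ univ.filter (R i), (y i - y j) * g (y i - y j)| := abs_sum_le_sum_abs _ _
    _ ≤ ∑ _i : ι, Fintype.card ι * C₀ := sum_le_sum fun i _ => hrow i
    _ = Fintype.card ι ^ 2 * C₀ := by simp [sq, mul_assoc]

end Symmetrization

section ChargedDynamics

variable {n : ℕ}

noncomputable def secondMoment (y : Fin n → ℝ) : ℝ := 1 / (n : ℝ) * ∑ i, y i ^ 2

noncomputable def chargedVelocity (b : Fin n → ℤ) (V' W' : ℝ → ℝ) (y : Fin n → ℝ) (i : Fin n) : ℝ :=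
  -(1 / (n : ℝ)) * ∑ j ∈ univ.filter (fun j => b i * b j = 1), V' (y i - y j)
    - (1 / (n : ℝ)) * ∑ j ∈ univ.filter (fun j => b i * b j = -1), W' (y i - y j)

theorem hasDerivAt_secondMoment {x : ℝ → Fin n → ℝ} {v : Fin n → ℝ} {t : ℝ}
    (hx : ∀ i, HasDerivAt (fun s => x s i) (v i) t) :
    HasDerivAt (fun s => secondMoment (x s)) (2 / n * ∑ i, x t i * v i) t := by
  have hsum : HasDerivAt (fun s => ∑ i, x s i ^ 2) (∑ i, 2 * x t i * v i) t :=
    HasDerivAt.fun_sum fun i _ => by simpa using (hx i).fun_pow 2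
  refine (hsum.const_mul (1 / (n : ℝ))).congr_deriv ?_
  rw [mul_sum, mul_sum]
  exact sum_congr rfl fun i _ => by ring

theorem abs_sum_mul_chargedVelocity_le (b : Fin n → ℤ) {V' W' : ℝ → ℝ}
    (hVodd : ∀ r, V' (-r) = -V' r) (hWodd : ∀ r, W' (-r) = -W' r)
    {C₀ : ℝ} (hVbd : ∀ r, |r * V' r| ≤ C₀) (hWbd : ∀ r, |r * W' r| ≤ C₀) (y : Fin n → ℝ) :
    |∑ i, y i * chargedVelocity b V' W' y i| ≤ n * C₀ := by
  have hsymm (c : ℤ) : ∀ i j, b i * b j = c → b j * b i = c := fun i j h => by rwa [mul_comm]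
  have hV := abs_sum_mul_sum_filter_odd_le (fun i j => b i * b j = 1) y V' (hsymm 1) hVodd hVbd
  have hW := abs_sum_mul_sum_filter_odd_le (fun i j => b i * b j = -1) y W' (hsymm (-1)) hWodd hWbd
  rw [Fintype.card_fin] at hV hW
  have hsplit : ∑ i, y i * chargedVelocity b V' W' y i
      = -(1 / (n : ℝ)) * ((∑ i, y i * ∑ j ∈ univ.filter (fun j => b i * b j = 1), V' (y i - y j))
          + ∑ i, y i * ∑ j ∈ univ.filter (fun j => b i * b j = -1), W' (y i - y j)) := by
    rw [← sum_add_distrib, mul_sum]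
    exact sum_congr rfl fun i _ => by unfold chargedVelocity; ring
  rcases n.eq_zero_or_pos with rfl | hn
  · simp
  calc _ = 1 / (n : ℝ) * |(∑ i, y i * ∑ j ∈ univ.filter (fun j => b i * b j = 1), V' (y i - y j))
          + ∑ i, y i * ∑ j ∈ univ.filter (fun j => b i * b j = -1), W' (y i - y j)| := by
        rw [hsplit, abs_mul, abs_neg, abs_of_pos (by positivity)]
    _ ≤ 1 / (n : ℝ) * ((n : ℝ) ^ 2 * C₀ / 2 + (n : ℝ) ^ 2 * C₀ / 2) := by
        gcongr
        exact (abs_add_le _ _).trans (add_le_add hV hW)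
    _ = n * C₀ := by field_simp; ring

end ChargedDynamics

/-- Second-moment bound along the particle dynamics: `M₂(x(t)) ≤ M₂(x(0)) + C·t`. -/
theorem second_moment_bound (C₀ : ℝ) (hC₀ : 0 < C₀) :
    ∃ C > 0, ∀ (n : ℕ), 2 ≤ n → ∀ (T : ℝ), 0 < T →
      ∀ (x : ℝ → Fin n → ℝ) (b : Fin n → ℤ) (V' W' : ℝ → ℝ),
        (∀ r : ℝ, V' (-r) = -V' r) → (∀ r : ℝ, W' (-r) = -W' r) →
        (∀ r : ℝ, abs (r * V' r) ≤ C₀) → (∀ r : ℝ, abs (r * W' r) ≤ C₀) →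
        (∀ t ∈ Set.Icc (0 : ℝ) T, ∀ i, HasDerivAt (fun s => x s i)
          (-(1 / (n : ℝ)) * ∑ j ∈ univ.filter (fun j => b i * b j = 1), V' (x t i - x t j)
            - (1 / (n : ℝ)) * ∑ j ∈ univ.filter (fun j => b i * b j = -1), W' (x t i - x t j)) t) →
        ∀ t ∈ Set.Icc (0 : ℝ) T,
          (1 / (n : ℝ)) * ∑ i, (x t i) ^ 2 ≤ (1 / (n : ℝ)) * ∑ i, (x 0 i) ^ 2 + C * t := by
  refine ⟨2 * C₀, by positivity, fun n hn T hT x b V' W' hVodd hWodd hVbd hWbd hx t ht => ?_⟩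
  have hn0 : (0 : ℝ) < n := by exact_mod_cast (by omega : 0 < n)
  have hderiv : ∀ s ∈ Set.Icc 0 T, HasDerivWithinAt (fun s => secondMoment (x s))
      (2 / n * ∑ i, x s i * chargedVelocity b V' W' (x s) i) (Set.Icc 0 T) s :=
    fun s hs => (hasDerivAt_secondMoment (hx s hs)).hasDerivWithinAt
  have hbound : ∀ s ∈ Set.Icc 0 T, ‖2 / n * ∑ i, x s i * chargedVelocity b V' W' (x s) i‖ ≤ 2 * C₀ :=
    fun s _ => calc
      _ ≤ 2 / n * (n * C₀) := by
        rw [norm_mul, Real.norm_eq_abs, abs_of_pos (by positivity)]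
        gcongr
        exact abs_sum_mul_chargedVelocity_le b hVodd hWodd hVbd hWbd (x s)
      _ = 2 * C₀ := by field_simp
  have hmvt := Convex.norm_image_sub_le_of_norm_hasDerivWithin_le hderiv hbound
    (convex_Icc 0 T) (Set.left_mem_Icc.2 hT.le) ht
  rw [Real.norm_eq_abs, Real.norm_eq_abs, sub_zero, abs_of_nonneg ht.1] at hmvt
  have hupper := (abs_le.1 hmvt).2
  change secondMoment (x t) ≤ secondMoment (x 0) + 2 * C₀ * t
  linarith
end

section
/- Under the same hypotheses as the second-moment bound, the fourth moment M₄(x(t)) = (1/n) Σ_i x_i(t)⁴ satisfies (d/dt)M₄(x(t)) ≤ C·M₂(x(t)) for a.e. t, and hence M₄(x(t)) ≤ M₄(x(0)) + C·t·(M₂(x(0)) + t) for all t ∈ [0,T], with C depending only on the bound C₀ on |rV'(r)| and |rW'(r)|. -/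
/-!
Merge the two interactions into one pair force `φ i j` (`V'` when `b i * b j = 1`, `W'` when
`b i * b j = -1`, zero otherwise), which satisfies `φ j i (-r) = -φ i j r` and `|r φ i j r| ≤ C₀`,
so that `ẋᵢ = -(1/n) ∑ⱼ φ i j (xᵢ - xⱼ)`. Swapping `i` and `j` gives
`∑ᵢ g(xᵢ) ẋᵢ = -(1/2n) ∑ᵢⱼ (g(xᵢ) - g(xⱼ)) φ i j (xᵢ - xⱼ)`. For `g = x³`, factor
`a³ - b³ = (a² + ab + b²)(a - b)` and use `0 ≤ a² + ab + b² ≤ 3/2 (a² + b²)`: this gives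
`M₄' ≤ 6 C₀ M₂`. For `g = x` the same computation gives `M₂' ≤ C₀`, and integrating both
differential inequalities yields the bound on `M₄`.
-/

open Finset

theorem two_mul_sum_mul_sum_of_antisymm {ι R : Type*} [Fintype ι] [CommRing R]
    (g : ι → R) (a : ι → ι → R) (ha : ∀ i j, a j i = -a i j) :
    2 * ∑ i, g i * ∑ j, a i j = ∑ i, ∑ j, (g i - g j) * a i j := by
  have hswap : ∑ i, ∑ j, g j * a i j = -∑ i, ∑ j, g i * a i j := by
    rw [Finset.sum_comm]
    simp only [← Finset.sum_neg_distrib, ← mul_neg]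
    exact Finset.sum_congr rfl fun i _ => Finset.sum_congr rfl fun j _ => by rw [ha]
  calc 2 * ∑ i, g i * ∑ j, a i j = ∑ i, ∑ j, g i * a i j - ∑ i, ∑ j, g j * a i j := by
        rw [hswap, sub_neg_eq_add, ← two_mul]
        simp only [Finset.mul_sum]
    _ = ∑ i, ∑ j, (g i - g j) * a i j := by simp only [sub_mul, Finset.sum_sub_distrib]

theorem neg_cube_sub_cube_mul_le {a b p C₀ : ℝ} (h : |(a - b) * p| ≤ C₀) :
    -((a ^ 3 - b ^ 3) * p) ≤ 3 / 2 * C₀ * (a ^ 2 + b ^ 2) := by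
  have hq : 0 ≤ a ^ 2 + a * b + b ^ 2 := by nlinarith [sq_nonneg (a + b)]
  have hq' : a ^ 2 + a * b + b ^ 2 ≤ 3 / 2 * (a ^ 2 + b ^ 2) := by nlinarith [sq_nonneg (a - b)]
  calc -((a ^ 3 - b ^ 3) * p) = (a ^ 2 + a * b + b ^ 2) * -((a - b) * p) := by ring
    _ ≤ (a ^ 2 + a * b + b ^ 2) * C₀ := mul_le_mul_of_nonneg_left ((neg_le_abs _).trans h) hq
    _ ≤ 3 / 2 * (a ^ 2 + b ^ 2) * C₀ := mul_le_mul_of_nonneg_right hq' ((abs_nonneg _).trans h)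
    _ = 3 / 2 * C₀ * (a ^ 2 + b ^ 2) := by ring

section PairInteraction

variable {ι : Type*} [Fintype ι] {φ : ι → ι → ℝ → ℝ} {C₀ : ℝ}

theorem neg_sum_cube_mul_sum_le (hodd : ∀ i j r, φ j i (-r) = -φ i j r)
    (hbound : ∀ i j r, |r * φ i j r| ≤ C₀) (y : ι → ℝ) :
    -∑ i, y i ^ 3 * ∑ j, φ i j (y i - y j)
      ≤ 3 / 2 * C₀ * Fintype.card ι * ∑ i, y i ^ 2 := by
  have hsymm := two_mul_sum_mul_sum_of_antisymm (fun i => y i ^ 3)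
    (fun i j => φ i j (y i - y j)) fun i j => by simp only [← neg_sub (y i), hodd]
  have hpair : ∀ i j, -((y i ^ 3 - y j ^ 3) * φ i j (y i - y j))
      ≤ 3 / 2 * C₀ * (y i ^ 2 + y j ^ 2) := fun i j => neg_cube_sub_cube_mul_le (hbound i j _)
  have hsum : ∑ i, ∑ j, 3 / 2 * C₀ * (y i ^ 2 + y j ^ 2)
      = 3 * C₀ * Fintype.card ι * ∑ i, y i ^ 2 := by
    simp only [mul_add, Finset.sum_add_distrib, Finset.sum_const, Finset.card_univ, nsmul_eq_mul,
      ← Finset.mul_sum]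
    ring
  have hpairs := Finset.sum_le_sum fun i (_ : i ∈ univ) =>
    Finset.sum_le_sum fun j (_ : j ∈ univ) => hpair i j
  simp only [Finset.sum_neg_distrib] at hpairs
  linarith

theorem neg_sum_mul_sum_le (hodd : ∀ i j r, φ j i (-r) = -φ i j r)
    (hbound : ∀ i j r, |r * φ i j r| ≤ C₀) (y : ι → ℝ) :
    -∑ i, y i * ∑ j, φ i j (y i - y j) ≤ C₀ * Fintype.card ι ^ 2 / 2 := by
  have hsymm := two_mul_sum_mul_sum_of_antisymm y
    (fun i j => φ i j (y i - y j)) fun i j => by simp only [← neg_sub (y i), hodd]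
  have hpairs := Finset.sum_le_sum fun i (_ : i ∈ univ) => Finset.sum_le_sum fun j (_ : j ∈ univ) =>
    (neg_le_abs _).trans (hbound i j (y i - y j))
  simp only [Finset.sum_neg_distrib, Finset.sum_const, Finset.card_univ, nsmul_eq_mul] at hpairs
  nlinarith

theorem mul_sum_cube_mul_velocity_le (hodd : ∀ i j r, φ j i (-r) = -φ i j r)
    (hbound : ∀ i j r, |r * φ i j r| ≤ C₀) (y : ι → ℝ) :
    (1 / Fintype.card ι : ℝ) *
        ∑ i, 4 * y i ^ 3 * (-(1 / Fintype.card ι : ℝ) * ∑ j, φ i j (y i - y j))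
      ≤ 6 * C₀ * ((1 / Fintype.card ι : ℝ) * ∑ i, y i ^ 2) := by
  set N : ℝ := (Fintype.card ι : ℝ)
  rcases eq_or_ne N 0 with hN | hN
  · simp [hN]
  calc (1 / N) * ∑ i, 4 * y i ^ 3 * (-(1 / N) * ∑ j, φ i j (y i - y j))
      = 4 / N ^ 2 * -∑ i, y i ^ 3 * ∑ j, φ i j (y i - y j) := by
        rw [← Finset.sum_neg_distrib, Finset.mul_sum, Finset.mul_sum]
        exact Finset.sum_congr rfl fun i _ => by ring
    _ ≤ 4 / N ^ 2 * (3 / 2 * C₀ * N * ∑ i, y i ^ 2) := by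
        gcongr
        exact neg_sum_cube_mul_sum_le hodd hbound y
    _ = 6 * C₀ * ((1 / N) * ∑ i, y i ^ 2) := by field_simp; ring

theorem mul_sum_mul_velocity_le [Nonempty ι] (hodd : ∀ i j r, φ j i (-r) = -φ i j r)
    (hbound : ∀ i j r, |r * φ i j r| ≤ C₀) (y : ι → ℝ) :
    (1 / Fintype.card ι : ℝ) * ∑ i, 2 * y i * (-(1 / Fintype.card ι : ℝ) * ∑ j, φ i j (y i - y j))
      ≤ C₀ := by
  set N : ℝ := (Fintype.card ι : ℝ)
  have hN : N ≠ 0 := Nat.cast_ne_zero.mpr Fintype.card_ne_zero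
  calc (1 / N) * ∑ i, 2 * y i * (-(1 / N) * ∑ j, φ i j (y i - y j))
      = 2 / N ^ 2 * -∑ i, y i * ∑ j, φ i j (y i - y j) := by
        rw [← Finset.sum_neg_distrib, Finset.mul_sum, Finset.mul_sum]
        exact Finset.sum_congr rfl fun i _ => by ring
    _ ≤ 2 / N ^ 2 * (C₀ * N ^ 2 / 2) := by
        gcongr
        exact neg_sum_mul_sum_le hodd hbound y
    _ = C₀ := by field_simp

end PairInteraction

section SignedPairs

variable {ι : Type*} (b : ι → ℤ) (V' W' : ℝ → ℝ)

def pairForce (i j : ι) : ℝ → ℝ :=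
  if b i * b j = 1 then V' else if b i * b j = -1 then W' else 0

variable {b V' W'}

theorem pairForce_neg (hV : ∀ r, V' (-r) = -V' r) (hW : ∀ r, W' (-r) = -W' r) (i j : ι) (r : ℝ) :
    pairForce b V' W' j i (-r) = -pairForce b V' W' i j r := by
  unfold pairForce
  rw [mul_comm (b j)]
  split_ifs <;> simp [hV, hW]

theorem abs_mul_pairForce_le {C₀ : ℝ} (hV : ∀ r, |r * V' r| ≤ C₀) (hW : ∀ r, |r * W' r| ≤ C₀)
    (i j : ι) (r : ℝ) : |r * pairForce b V' W' i j r| ≤ C₀ := by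
  unfold pairForce
  split_ifs
  · exact hV r
  · exact hW r
  · simpa using (abs_nonneg _).trans (hV 0)

theorem sum_filter_add_sum_filter_eq_sum_pairForce [Fintype ι] (f : ι → ℝ) (i : ι) :
    ∑ j ∈ univ.filter (fun j => b i * b j = 1), V' (f j)
      + ∑ j ∈ univ.filter (fun j => b i * b j = -1), W' (f j)
      = ∑ j, pairForce b V' W' i j (f j) := by
  rw [Finset.sum_filter, Finset.sum_filter, ← Finset.sum_add_distrib]
  refine Finset.sum_congr rfl fun j _ => ?_
  unfold pairForce
  split_ifs with h₁ h₂ <;> simp_all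

end SignedPairs

theorem image_le_of_hasDerivAt_le_hasDerivAt {f f' g g' : ℝ → ℝ} {a b : ℝ}
    (hf : ∀ t ∈ Set.Icc a b, HasDerivAt f (f' t) t) (hg : ∀ t ∈ Set.Icc a b, HasDerivAt g (g' t) t)
    (ha : f a ≤ g a) (hle : ∀ t ∈ Set.Icc a b, f' t ≤ g' t) :
    ∀ t ∈ Set.Icc a b, f t ≤ g t :=
  image_le_of_deriv_right_le_deriv_boundary
    (fun t ht => (hf t ht).continuousAt.continuousWithinAt)
    (fun t ht => (hf t (Set.Ico_subset_Icc_self ht)).hasDerivWithinAt) ha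
    (fun t ht => (hg t ht).continuousAt.continuousWithinAt)
    (fun t ht => (hg t (Set.Ico_subset_Icc_self ht)).hasDerivWithinAt)
    (fun t ht => hle t (Set.Ico_subset_Icc_self ht))

theorem hasDerivAt_mul_sum_pow {ι : Type*} [Fintype ι] {x : ℝ → ι → ℝ} {v : ι → ℝ} {t : ℝ}
    (hx : ∀ i, HasDerivAt (fun s => x s i) (v i) t) (c : ℝ) (k : ℕ) :
    HasDerivAt (fun s => c * ∑ i, x s i ^ k) (c * ∑ i, k * x t i ^ (k - 1) * v i) t :=
  (HasDerivAt.fun_sum fun i _ => (hx i).fun_pow k).const_mul c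

theorem le_add_mul_add_mul_sq_of_hasDerivAt {f f' m m' : ℝ → ℝ} {T a c : ℝ} (ha : 0 ≤ a)
    (hf : ∀ t ∈ Set.Icc 0 T, HasDerivAt f (f' t) t) (hm : ∀ t ∈ Set.Icc 0 T, HasDerivAt m (m' t) t)
    (hf' : ∀ t ∈ Set.Icc 0 T, f' t ≤ a * m t) (hm' : ∀ t ∈ Set.Icc 0 T, m' t ≤ c) :
    ∀ t ∈ Set.Icc 0 T, f t ≤ f 0 + a * m 0 * t + a * c / 2 * t ^ 2 := by
  have hm_le : ∀ t ∈ Set.Icc 0 T, m t ≤ m 0 + c * t :=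
    image_le_of_hasDerivAt_le_hasDerivAt hm (g' := fun _ => c)
      (fun t _ => by simpa using ((hasDerivAt_id t).const_mul c).const_add (m 0)) (by simp) hm'
  refine image_le_of_hasDerivAt_le_hasDerivAt hf (g' := fun s => a * m 0 + a * c * s)
    (fun s _ => ((((hasDerivAt_id s).const_mul _).const_add _).add
      ((hasDerivAt_pow 2 s).const_mul _)).congr_deriv (by simp; ring)) (by simp) fun s hs => ?_
  calc f' s ≤ a * m s := hf' s hs
    _ ≤ a * (m 0 + c * s) := mul_le_mul_of_nonneg_left (hm_le s hs) ha
    _ = a * m 0 + a * c * s := by ring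

/-- Fourth-moment bound along the particle dynamics:
`(d/dt)M₄ ≤ C·M₂` and `M₄(x(t)) ≤ M₄(x(0)) + C·t·(M₂(x(0)) + t)`. -/
theorem fourth_moment_bound (C₀ : ℝ) (hC₀ : 0 < C₀) :
    ∃ C > 0, ∀ (n : ℕ), 2 ≤ n → ∀ (T : ℝ), 0 < T →
      ∀ (x : ℝ → Fin n → ℝ) (b : Fin n → ℤ) (V' W' : ℝ → ℝ),
        (∀ r : ℝ, V' (-r) = -V' r) → (∀ r : ℝ, W' (-r) = -W' r) →
        (∀ r : ℝ, abs (r * V' r) ≤ C₀) → (∀ r : ℝ, abs (r * W' r) ≤ C₀) →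
        (∀ t ∈ Set.Icc (0 : ℝ) T, ∀ i, HasDerivAt (fun s => x s i)
          (-(1 / (n : ℝ)) * ∑ j ∈ univ.filter (fun j => b i * b j = 1), V' (x t i - x t j)
            - (1 / (n : ℝ)) * ∑ j ∈ univ.filter (fun j => b i * b j = -1), W' (x t i - x t j)) t) →
        (∀ t ∈ Set.Icc (0 : ℝ) T, ∀ d : ℝ,
            HasDerivAt (fun s => (1 / (n : ℝ)) * ∑ i, (x s i) ^ 4) d t →
            d ≤ C * ((1 / (n : ℝ)) * ∑ i, (x t i) ^ 2)) ∧
        (∀ t ∈ Set.Icc (0 : ℝ) T,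
          (1 / (n : ℝ)) * ∑ i, (x t i) ^ 4
            ≤ (1 / (n : ℝ)) * ∑ i, (x 0 i) ^ 4
              + C * t * ((1 / (n : ℝ)) * ∑ i, (x 0 i) ^ 2 + t)) := by
  refine ⟨6 * C₀ + 3 * C₀ ^ 2, by positivity, ?_⟩
  intro n hn T hT x b V' W' hV hW hVb hWb hx
  have : Nonempty (Fin n) := ⟨⟨0, by omega⟩⟩
  have hodd := pairForce_neg (b := b) hV hW
  have hbound := abs_mul_pairForce_le (b := b) hVb hWb
  set v : ℝ → Fin n → ℝ := fun t i => -(1 / (n : ℝ)) * ∑ j, pairForce b V' W' i j (x t i - x t j)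
  have hv : ∀ t ∈ Set.Icc 0 T, ∀ i, HasDerivAt (fun s => x s i) (v t i) t := fun t ht i => by
    simpa only [v, mul_add, ← sum_filter_add_sum_filter_eq_sum_pairForce, neg_mul,
      sub_eq_add_neg] using hx t ht i
  set M₂ := fun s => (1 / (n : ℝ)) * ∑ i, x s i ^ 2
  have hM₂ : ∀ t ∈ Set.Icc 0 T, HasDerivAt M₂ ((1 / (n : ℝ)) * ∑ i, 2 * x t i * v t i) t :=
    fun t ht => (hasDerivAt_mul_sum_pow (hv t ht) _ 2).congr_deriv (by norm_num)
  have hM₄ : ∀ t ∈ Set.Icc 0 T, HasDerivAt (fun s => (1 / (n : ℝ)) * ∑ i, x s i ^ 4)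
      ((1 / (n : ℝ)) * ∑ i, 4 * x t i ^ 3 * v t i) t :=
    fun t ht => (hasDerivAt_mul_sum_pow (hv t ht) _ 4).congr_deriv (by norm_num)
  have hM₄' : ∀ t, (1 / (n : ℝ)) * ∑ i, 4 * x t i ^ 3 * v t i ≤ 6 * C₀ * M₂ t := fun t => by
    simpa only [Fintype.card_fin] using mul_sum_cube_mul_velocity_le hodd hbound (x t)
  have hM₂' : ∀ t, (1 / (n : ℝ)) * ∑ i, 2 * x t i * v t i ≤ C₀ := fun t => by
    simpa only [Fintype.card_fin] using mul_sum_mul_velocity_le hodd hbound (x t)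
  have hM₂_nonneg : ∀ t, 0 ≤ M₂ t := fun t => by positivity
  refine ⟨fun t ht d hd => ?_, fun t ht => ?_⟩
  · rw [hd.unique (hM₄ t ht)]
    exact (hM₄' t).trans (by nlinarith [hM₂_nonneg t])
  · have hM₄_le := le_add_mul_add_mul_sq_of_hasDerivAt (by positivity) hM₄ hM₂
      (fun t _ => hM₄' t) (fun t _ => hM₂' t) t ht
    nlinarith [hM₄_le, ht.1, mul_nonneg (mul_nonneg (sq_nonneg C₀) ht.1) (hM₂_nonneg 0)]
end
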